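/- arXiv:2208.02147 — 2 statements merged into one kernel-verified Lean document; each statement's English description precedes it below -/
import Mathlib

section
/- Let ψ holomorphic on 𝔻ⁿ and φ a holomorphic self-map of 𝔻ⁿ, with μ a continuous positive weight. If ψ ∈ H^∞_μ(𝔻ⁿ) and (1/2)μ(z)|ψ(z)| Σ_{j=1}^n log((1+|φ_j(z)|)/(1-|φ_j(z)|)) → 0 as φ(z) → ∂𝔻ⁿ (i.e., as max_j |φ_j(z)| → 1), then W_{ψ,φ} : ℬ(𝔻ⁿ) → H^∞_μ(𝔻ⁿ) is compact. -/
open Complex Filter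

noncomputable section

/-- The unit polydisk 𝔻ⁿ in ℂⁿ. -/
def polyDisk (n : ℕ) : Set (Fin n → ℂ) := {z | ∀ j, ‖z j‖ < 1}

/-- The Bergman metric on 𝔻ⁿ evaluated on (u, ū): H_z(u,ū) = Σ_j |u_j|²/(1-|z_j|²)². -/
def bergmanH {n : ℕ} (z u : Fin n → ℂ) : ℝ := ∑ j, ‖u j‖ ^ 2 / (1 - ‖z j‖ ^ 2) ^ 2

/-- Q_f(z) = sup_{u≠0} |∇f(z)u| / H_z(u,ū)^{1/2}. -/
def QBloch {n : ℕ} (f : (Fin n → ℂ) → ℂ) (z : Fin n → ℂ) : ℝ :=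
  sSup {r : ℝ | ∃ u : Fin n → ℂ, u ≠ 0 ∧ r = ‖fderiv ℂ f z u‖ / Real.sqrt (bergmanH z u)}

/-- The Bloch seminorm β_f = sup_{z ∈ 𝔻ⁿ} Q_f(z). -/
def betaP {n : ℕ} (f : (Fin n → ℂ) → ℂ) : ℝ := sSup (QBloch f '' polyDisk n)

/-- A Bloch function on 𝔻ⁿ: holomorphic with finite Bloch seminorm. -/
def IsBlochP {n : ℕ} (f : (Fin n → ℂ) → ℂ) : Prop :=
  DifferentiableOn ℂ f (polyDisk n) ∧ BddAbove (QBloch f '' polyDisk n)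

/-- The Bloch norm ‖f‖_ℬ = |f(0)| + β_f on 𝔻ⁿ. -/
def blochNormP {n : ℕ} (f : (Fin n → ℂ) → ℂ) : ℝ := ‖f 0‖ + betaP f

/-- The *-little Bloch space: Q_f(z) → 0 as z tends to the distinguished boundary. -/
def IsLittleBlochP {n : ℕ} (f : (Fin n → ℂ) → ℂ) : Prop :=
  IsBlochP f ∧
    ∀ ε > 0, ∃ r < (1 : ℝ), ∀ z ∈ polyDisk n, (∀ j, r < ‖z j‖) → QBloch f z < ε

/-- ϑ_μ(ψ,φ) pointwise quantity: (1/2)μ(z)|ψ(z)| Σ_j log((1+|φ_j(z)|)/(1-|φ_j(z)|)). -/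
def thetaFn {n : ℕ} (μ : (Fin n → ℂ) → ℝ) (ψ : (Fin n → ℂ) → ℂ)
    (φ : (Fin n → ℂ) → Fin n → ℂ) (z : Fin n → ℂ) : ℝ :=
  (1 / 2) * (μ z * (‖ψ z‖ * ∑ j, Real.log ((1 + ‖φ z j‖) / (1 - ‖φ z j‖))))

/-- Values μ(z)|ψ(z)||f(φ(z))| over f in the unit ball of ℬ(𝔻ⁿ) and z ∈ 𝔻ⁿ;
its supremum is the operator norm of W_{ψ,φ} : ℬ(𝔻ⁿ) → H^∞_μ(𝔻ⁿ). -/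
def WSetP {n : ℕ} (μ : (Fin n → ℂ) → ℝ) (ψ : (Fin n → ℂ) → ℂ)
    (φ : (Fin n → ℂ) → Fin n → ℂ) : Set ℝ :=
  {r : ℝ | ∃ f : (Fin n → ℂ) → ℂ, IsBlochP f ∧ blochNormP f ≤ 1 ∧
    ∃ z ∈ polyDisk n, r = μ z * (‖ψ z‖ * ‖f (φ z)‖)}

/-- The analogous set for the little Bloch space ℬ_{0*}(𝔻ⁿ). -/
def WSetP0 {n : ℕ} (μ : (Fin n → ℂ) → ℝ) (ψ : (Fin n → ℂ) → ℂ)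
    (φ : (Fin n → ℂ) → Fin n → ℂ) : Set ℝ :=
  {r : ℝ | ∃ f : (Fin n → ℂ) → ℂ, IsLittleBlochP f ∧ blochNormP f ≤ 1 ∧
    ∃ z ∈ polyDisk n, r = μ z * (‖ψ z‖ * ‖f (φ z)‖)}

/-- Compactness of W_{ψ,φ} : ℬ(𝔻ⁿ) → H^∞_μ(𝔻ⁿ): every sequence in the image of
the unit ball of ℬ(𝔻ⁿ) has a subsequence converging in the norm of H^∞_μ(𝔻ⁿ). -/
def WCompactP {n : ℕ} (μ : (Fin n → ℂ) → ℝ) (ψ : (Fin n → ℂ) → ℂ)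
    (φ : (Fin n → ℂ) → Fin n → ℂ) : Prop :=
  ∀ g : ℕ → (Fin n → ℂ) → ℂ, (∀ k, IsBlochP (g k) ∧ blochNormP (g k) ≤ 1) →
    ∃ σ : ℕ → ℕ, StrictMono σ ∧ ∃ h : (Fin n → ℂ) → ℂ,
      ∀ ε > 0, ∃ N : ℕ, ∀ j ≥ N, ∀ z ∈ polyDisk n,
        μ z * ‖ψ z * g (σ j) (φ z) - h z‖ ≤ ε

namespace CP
variable {n : ℕ}

lemma isOpen_polyDisk : IsOpen (polyDisk n) := by
  have : polyDisk n = Set.pi Set.univ (fun _ : Fin n => Metric.ball (0:ℂ) 1) := by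
    ext z; simp [polyDisk, Set.mem_pi]
  rw [this]
  exact isOpen_set_pi Set.finite_univ (fun _ _ => Metric.isOpen_ball)

lemma zero_mem_polyDisk : (0 : Fin n → ℂ) ∈ polyDisk n := by
  intro j; simp

lemma one_sub_sq_pos {z : Fin n → ℂ} (hz : z ∈ polyDisk n) (j : Fin n) :
    0 < 1 - ‖z j‖ ^ 2 := by
  have := hz j
  nlinarith [norm_nonneg (z j)]

lemma norm_sq_le_bergmanH {z u : Fin n → ℂ} (hz : z ∈ polyDisk n) :
    ‖u‖ ^ 2 ≤ bergmanH z u := by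
  have h1 : ∀ j, ‖u j‖ ^ 2 ≤ ‖u j‖ ^ 2 / (1 - ‖z j‖ ^ 2) ^ 2 := by
    intro j
    have h2 := one_sub_sq_pos hz j
    have h3 : (1 - ‖z j‖ ^ 2) ^ 2 ≤ 1 := by nlinarith [norm_nonneg (z j), sq_nonneg (‖z j‖)]
    have := sq_nonneg (‖u j‖)
    calc ‖u j‖ ^ 2 = ‖u j‖ ^ 2 / 1 := by ring
    _ ≤ ‖u j‖ ^ 2 / (1 - ‖z j‖ ^ 2) ^ 2 := by
        apply div_le_div_of_nonneg_left this (by positivity) h3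
  have h4 : ∑ j, ‖u j‖ ^ 2 ≤ bergmanH z u := Finset.sum_le_sum (fun j _ => h1 j)
  refine le_trans ?_ h4
  have hs : (0:ℝ) ≤ ∑ j, ‖u j‖ ^ 2 := Finset.sum_nonneg (fun j _ => sq_nonneg _)
  have hle : ‖u‖ ≤ Real.sqrt (∑ j, ‖u j‖ ^ 2) := by
    apply (pi_norm_le_iff_of_nonneg (Real.sqrt_nonneg _)).2
    intro i
    rw [Real.le_sqrt (norm_nonneg _)]
    exact Finset.single_le_sum (f := fun j => ‖u j‖ ^ 2) (fun j _ => sq_nonneg _) (Finset.mem_univ i)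
    exact hs
  calc ‖u‖ ^ 2 ≤ Real.sqrt (∑ j, ‖u j‖ ^ 2) ^ 2 := by
        exact pow_le_pow_left₀ (norm_nonneg u) hle 2
  _ = ∑ j, ‖u j‖ ^ 2 := Real.sq_sqrt hs

end CP

namespace CP2
open CP
variable {n : ℕ}

lemma bergmanH_nonneg (z u : Fin n → ℂ) : 0 ≤ bergmanH z u :=
  Finset.sum_nonneg (fun j _ => div_nonneg (sq_nonneg _) (sq_nonneg _))

lemma norm_le_sqrt_bergmanH {z u : Fin n → ℂ} (hz : z ∈ polyDisk n) :
    ‖u‖ ≤ Real.sqrt (bergmanH z u) := by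
  rw [Real.le_sqrt (norm_nonneg _)]
  · exact norm_sq_le_bergmanH hz
  · exact bergmanH_nonneg z u

lemma sqrt_bergmanH_pos {z u : Fin n → ℂ} (hz : z ∈ polyDisk n) (hu : u ≠ 0) :
    0 < Real.sqrt (bergmanH z u) :=
  lt_of_lt_of_le (norm_pos_iff.2 hu) (norm_le_sqrt_bergmanH hz)

lemma QBloch_bddAbove (f : (Fin n → ℂ) → ℂ) {z : Fin n → ℂ} (hz : z ∈ polyDisk n) :
    BddAbove {r : ℝ | ∃ u : Fin n → ℂ, u ≠ 0 ∧ r = ‖fderiv ℂ f z u‖ / Real.sqrt (bergmanH z u)} := by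
  refine ⟨‖fderiv ℂ f z‖, ?_⟩
  rintro r ⟨u, hu, rfl⟩
  have h1 : (0:ℝ) < ‖u‖ := norm_pos_iff.2 hu
  have h2 := norm_le_sqrt_bergmanH (u := u) hz
  calc ‖fderiv ℂ f z u‖ / Real.sqrt (bergmanH z u) ≤ ‖fderiv ℂ f z u‖ / ‖u‖ :=
        div_le_div_of_nonneg_left (norm_nonneg _) h1 h2
  _ ≤ ‖fderiv ℂ f z‖ := by
      rw [div_le_iff₀ h1]
      exact (fderiv ℂ f z).le_opNorm u

lemma mem_le_QBloch {f : (Fin n → ℂ) → ℂ} {z u : Fin n → ℂ} (hz : z ∈ polyDisk n) (hu : u ≠ 0) :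
    ‖fderiv ℂ f z u‖ / Real.sqrt (bergmanH z u) ≤ QBloch f z :=
  le_csSup (QBloch_bddAbove f hz) ⟨u, hu, rfl⟩

lemma QBloch_le_betaP {f : (Fin n → ℂ) → ℂ} (hf : IsBlochP f) {z : Fin n → ℂ}
    (hz : z ∈ polyDisk n) : QBloch f z ≤ betaP f :=
  le_csSup hf.2 ⟨z, hz, rfl⟩

lemma betaP_nonneg (hn : 0 < n) {f : (Fin n → ℂ) → ℂ} (hf : IsBlochP f) : 0 ≤ betaP f := by
  set u : Fin n → ℂ := fun _ => 1 with hudef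
  have hu : u ≠ 0 := by
    intro h
    have := congrFun h ⟨0, hn⟩
    simp [hudef] at this
  have h0 : (0:ℝ) ≤ ‖fderiv ℂ f 0 u‖ / Real.sqrt (bergmanH 0 u) :=
    div_nonneg (norm_nonneg _) (Real.sqrt_nonneg _)
  exact le_trans h0 (le_trans (mem_le_QBloch zero_mem_polyDisk hu)
    (QBloch_le_betaP hf zero_mem_polyDisk))

lemma deriv_bound {f : (Fin n → ℂ) → ℂ} (hf : IsBlochP f) {z : Fin n → ℂ}
    (hz : z ∈ polyDisk n) (u : Fin n → ℂ) :
    ‖fderiv ℂ f z u‖ ≤ betaP f * Real.sqrt (bergmanH z u) := by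
  rcases eq_or_ne u 0 with rfl | hu
  · have : bergmanH z (0 : Fin n → ℂ) = 0 := by simp [bergmanH]
    simp [this]
  · have hpos := sqrt_bergmanH_pos hz hu
    have h1 : ‖fderiv ℂ f z u‖ / Real.sqrt (bergmanH z u) ≤ betaP f :=
      le_trans (mem_le_QBloch hz hu) (QBloch_le_betaP hf hz)
    calc ‖fderiv ℂ f z u‖ = ‖fderiv ℂ f z u‖ / Real.sqrt (bergmanH z u) * Real.sqrt (bergmanH z u) := by
          field_simp
    _ ≤ betaP f * Real.sqrt (bergmanH z u) := mul_le_mul_of_nonneg_right h1 hpos.le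

end CP2

namespace CP3
open CP CP2
variable {n : ℕ}

def rho (w : Fin n → ℂ) : ℝ := (1/2) * ∑ j, Real.log ((1 + ‖w j‖) / (1 - ‖w j‖))

lemma rho_nonneg {w : Fin n → ℂ} (hw : w ∈ polyDisk n) : 0 ≤ rho w := by
  apply mul_nonneg (by norm_num)
  apply Finset.sum_nonneg
  intro j _
  apply Real.log_nonneg
  have h1 : (0:ℝ) < 1 - ‖w j‖ := by have := hw j; linarith
  rw [le_div_iff₀ h1]
  have := norm_nonneg (w j); linarith

lemma integral_artanh {a : ℝ} (h0 : 0 ≤ a) (h1 : a < 1) :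
    ∫ t in (0:ℝ)..1, a / (1 - t^2 * a^2) = (1/2) * Real.log ((1+a)/(1-a)) := by
  have hden : ∀ t ∈ Set.uIcc (0:ℝ) 1, 0 < 1 - t*a ∧ 0 < 1 + t*a := by
    intro t ht
    rw [Set.uIcc_of_le (by norm_num : (0:ℝ) ≤ 1)] at ht
    constructor
    · nlinarith [ht.1, ht.2]
    · nlinarith [ht.1, ht.2]
  have key : ∀ t ∈ Set.uIcc (0:ℝ) 1,
      HasDerivAt (fun t => (1/2) * (Real.log (1+t*a) - Real.log (1-t*a)))
        (a / (1 - t^2*a^2)) t := by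
    intro t ht
    obtain ⟨hm, hp⟩ := hden t ht
    have d1 : HasDerivAt (fun t : ℝ => 1 + t*a) a t := by
      simpa using (hasDerivAt_mul_const a).const_add (1:ℝ)
    have d2 : HasDerivAt (fun t : ℝ => 1 - t*a) (-a) t := by
      simpa using (hasDerivAt_mul_const a).const_sub (1:ℝ)
    have l1 := d1.log (ne_of_gt hp)
    have l2 := d2.log (ne_of_gt hm)
    have := (l1.sub l2).const_mul ((1:ℝ)/2)
    refine this.congr_deriv ?_
    have hq : (1 - t^2*a^2) = (1+t*a)*(1-t*a) := by ring
    rw [hq]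
    rw [div_sub_div _ _ hp.ne' hm.ne', mul_div_assoc', div_left_inj' (mul_ne_zero hp.ne' hm.ne')]
    ring
  have hint : IntervalIntegrable (fun t : ℝ => a / (1 - t^2*a^2)) MeasureTheory.volume 0 1 := by
    apply ContinuousOn.intervalIntegrable
    apply ContinuousOn.div continuousOn_const (by fun_prop)
    intro t ht
    obtain ⟨hm, hp⟩ := hden t ht
    nlinarith
  rw [intervalIntegral.integral_eq_sub_of_hasDerivAt key hint]
  have e1 : (0:ℝ) < 1 - a := by linarith
  have e2 : (0:ℝ) < 1 + a := by linarith
  rw [Real.log_div (ne_of_gt e2) (ne_of_gt e1)]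
  norm_num

end CP3

namespace CP4
open CP CP2 CP3 Set
variable {n : ℕ}

lemma growth {f : (Fin n → ℂ) → ℂ} {Bc : ℝ} (hB : 0 ≤ Bc)
    (hf : DifferentiableOn ℂ f (polyDisk n))
    (hd : ∀ z ∈ polyDisk n, ∀ u, ‖fderiv ℂ f z u‖ ≤ Bc * Real.sqrt (bergmanH z u))
    {w : Fin n → ℂ} (hw : w ∈ polyDisk n) :
    ‖f w - f 0‖ ≤ Bc * rho w := by
  set a : Fin n → ℝ := fun j => ‖w j‖ with ha
  have ha0 : ∀ j, 0 ≤ a j := fun j => norm_nonneg _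
  have ha1 : ∀ j, a j < 1 := fun j => hw j
  have hmem : ∀ t ∈ Icc (0:ℝ) 1, t • w ∈ polyDisk n := by
    intro t ht j
    have : ‖(t • w) j‖ = |t| * ‖w j‖ := by
      show ‖t • w j‖ = _
      rw [norm_smul, Real.norm_eq_abs]
    rw [this, _root_.abs_of_nonneg ht.1]
    calc t * ‖w j‖ ≤ 1 * ‖w j‖ := mul_le_mul_of_nonneg_right ht.2 (norm_nonneg _)
    _ < 1 := by rw [one_mul]; exact hw j
  have hden : ∀ t ∈ Icc (0:ℝ) 1, ∀ j, 0 < 1 - t * a j ∧ 0 < 1 + t * a j := by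
    intro t ht j
    constructor
    · nlinarith [ht.1, ht.2, ha0 j, ha1 j]
    · nlinarith [ht.1, ht.2, ha0 j, ha1 j]
  have hden2 : ∀ t ∈ Icc (0:ℝ) 1, ∀ j, 0 < 1 - t^2 * a j ^ 2 := by
    intro t ht j
    obtain ⟨h1, h2⟩ := hden t ht j
    nlinarith
  -- the boundary function
  set B : ℝ → ℝ := fun t => (Bc/2) * ∑ j, (Real.log (1 + t * a j) - Real.log (1 - t * a j))
    with hBdef
  set B' : ℝ → ℝ := fun t => (Bc/2) * ∑ j, 2 * (a j / (1 - t^2 * a j ^ 2)) with hB'def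
  have hB' : ∀ t ∈ Icc (0:ℝ) 1, HasDerivAt B (B' t) t := by
    intro t ht
    have hj : ∀ j : Fin n, HasDerivAt (fun t => Real.log (1 + t * a j) - Real.log (1 - t * a j))
        (2 * (a j / (1 - t^2 * a j ^ 2))) t := by
      intro j
      obtain ⟨hm, hp⟩ := hden t ht j
      have d1 : HasDerivAt (fun t : ℝ => 1 + t * a j) (a j) t := by
        simpa using (hasDerivAt_mul_const (a j)).const_add (1:ℝ)
      have d2 : HasDerivAt (fun t : ℝ => 1 - t * a j) (-(a j)) t := by
        simpa using (hasDerivAt_mul_const (a j)).const_sub (1:ℝ)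
      have l1 := d1.log (ne_of_gt hp)
      have l2 := d2.log (ne_of_gt hm)
      refine (l1.sub l2).congr_deriv ?_
      have hq : (1 - t^2 * a j ^ 2) = (1 + t * a j) * (1 - t * a j) := by ring
      rw [hq]
      rw [div_sub_div _ _ hp.ne' hm.ne', mul_div_assoc', div_left_inj' (mul_ne_zero hp.ne' hm.ne')]
      ring
    have := HasDerivAt.sum (fun j (_ : j ∈ Finset.univ) => hj j)
    simpa [hBdef, hB'def] using this.const_mul (Bc/2)
  have hF' : ∀ t ∈ Icc (0:ℝ) 1, HasDerivAt (fun t : ℝ => f (t • w) - f 0)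
      (fderiv ℂ f (t • w) w) t := by
    intro t ht
    have hc : HasDerivAt (fun t : ℝ => t • w) w t := by
      simpa using (hasDerivAt_id t).smul_const w
    have hfd : DifferentiableAt ℂ f (t • w) :=
      hf.differentiableAt (isOpen_polyDisk.mem_nhds (hmem t ht))
    have := (hfd.hasFDerivAt.restrictScalars ℝ).comp_hasDerivAt t hc
    simpa using this.sub_const (f 0)
  have bound : ∀ t ∈ Ico (0:ℝ) 1, ‖fderiv ℂ f (t • w) w‖ ≤ B' t := by
    intro t ht
    have htI : t ∈ Icc (0:ℝ) 1 := ⟨ht.1, ht.2.le⟩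
    have h1 := hd _ (hmem t htI) w
    have hHeq : bergmanH (t • w) w = ∑ j, (a j / (1 - t^2 * a j ^ 2)) ^ 2 := by
      unfold bergmanH
      apply Finset.sum_congr rfl
      intro j _
      have : ‖(t • w) j‖ = |t| * ‖w j‖ := by
        show ‖t • w j‖ = _
        rw [norm_smul, Real.norm_eq_abs]
      rw [this, mul_pow, _root_.sq_abs, ← div_pow]
    have hsq : Real.sqrt (bergmanH (t • w) w) ≤ ∑ j, a j / (1 - t^2 * a j ^ 2) := by
      rw [hHeq]
      have h2 : ∑ j, (a j / (1 - t^2 * a j ^ 2)) ^ 2 ≤ (∑ j, a j / (1 - t^2 * a j ^ 2)) ^ 2 :=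
        Finset.sum_sq_le_sq_sum_of_nonneg
          (fun j _ => div_nonneg (ha0 j) (hden2 t htI j).le)
      calc Real.sqrt (∑ j, (a j / (1 - t^2 * a j ^ 2)) ^ 2)
          ≤ Real.sqrt ((∑ j, a j / (1 - t^2 * a j ^ 2)) ^ 2) := Real.sqrt_le_sqrt h2
      _ = ∑ j, a j / (1 - t^2 * a j ^ 2) := Real.sqrt_sq
          (Finset.sum_nonneg fun j _ => div_nonneg (ha0 j) (hden2 t htI j).le)
    calc ‖fderiv ℂ f (t • w) w‖ ≤ Bc * Real.sqrt (bergmanH (t • w) w) := h1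
    _ ≤ Bc * ∑ j, a j / (1 - t^2 * a j ^ 2) := mul_le_mul_of_nonneg_left hsq hB
    _ = B' t := by
        rw [hB'def]
        simp only [Finset.mul_sum]
        apply Finset.sum_congr rfl
        intro j _
        ring
  have key := image_norm_le_of_norm_deriv_right_le_deriv_boundary'
    (f := fun t : ℝ => f (t • w) - f 0) (f' := fun t => fderiv ℂ f (t • w) w)
    (a := (0:ℝ)) (b := 1)
    (fun t ht => ((hF' t ht).continuousAt).continuousWithinAt)
    (fun t ht => (hF' t ⟨ht.1, ht.2.le⟩).hasDerivWithinAt)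
    (B := B) (B' := B')
    (by simp [hBdef])
    (fun t ht => ((hB' t ht).continuousAt).continuousWithinAt)
    (fun t ht => (hB' t ⟨ht.1, ht.2.le⟩).hasDerivWithinAt)
    bound
  have hfin := key (right_mem_Icc.2 (by norm_num))
  simp only [one_smul] at hfin
  calc ‖f w - f 0‖ ≤ B 1 := hfin
  _ = Bc * rho w := by
      rw [hBdef]
      unfold rho
      rw [Finset.mul_sum, Finset.mul_sum]
      simp only
      rw [Finset.mul_sum]
      apply Finset.sum_congr rfl
      intro j _
      have h1 : (0:ℝ) < 1 - a j := by have := ha1 j; linarith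
      have h2 : (0:ℝ) < 1 + a j := by have := ha0 j; linarith
      rw [Real.log_div (ne_of_gt h2) (ne_of_gt h1)]
      simp only [one_mul]
      ring
  
end CP4

namespace CP5
open CP CP2 CP3 CP4 Set
variable {n : ℕ}

def K (n : ℕ) (r : ℝ) : Set (Fin n → ℂ) := {z | ∀ j, ‖z j‖ ≤ r}

lemma K_subset_polyDisk {r : ℝ} (hr : r < 1) : K n r ⊆ polyDisk n :=
  fun z hz j => lt_of_le_of_lt (hz j) hr

lemma isCompact_K (r : ℝ) : IsCompact (K n r) := by
  have : K n r = Set.pi Set.univ (fun _ : Fin n => Metric.closedBall (0:ℂ) r) := by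
    ext z; simp [K, Set.mem_pi, Metric.mem_closedBall, dist_eq_norm]
  rw [this]
  exact isCompact_univ_pi (fun _ => isCompact_closedBall _ _)

lemma convex_K (r : ℝ) : Convex ℝ (K n r) := by
  have : K n r = Set.pi Set.univ (fun _ : Fin n => Metric.closedBall (0:ℂ) r) := by
    ext z; simp [K, Set.mem_pi, Metric.mem_closedBall, dist_eq_norm]
  rw [this]
  exact convex_pi (fun _ _ => convex_closedBall _ _)

lemma lipschitz_on_K {f : (Fin n → ℂ) → ℂ} (hf : IsBlochP f) (hβ : betaP f ≤ 1)
    {r' : ℝ} (h0 : 0 ≤ r') (h1 : r' < 1) {x y : Fin n → ℂ} (hx : x ∈ K n r') (hy : y ∈ K n r') :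
    ‖f x - f y‖ ≤ (Real.sqrt n / (1 - r'^2)) * ‖x - y‖ := by
  set L : ℝ := Real.sqrt n / (1 - r'^2) with hL
  have hr2 : 0 < 1 - r'^2 := by nlinarith
  have hLnn : 0 ≤ L := div_nonneg (Real.sqrt_nonneg _) hr2.le
  have hdiff : ∀ v ∈ K n r', DifferentiableAt ℂ f v := fun v hv =>
    hf.1.differentiableAt (isOpen_polyDisk.mem_nhds (K_subset_polyDisk h1 hv))
  have hbd : ∀ v ∈ K n r', ‖fderiv ℂ f v‖ ≤ L := by
    intro v hv
    apply ContinuousLinearMap.opNorm_le_bound _ hLnn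
    intro u
    have h2 : bergmanH v u ≤ (L * ‖u‖)^2 := by
      have hterm : ∀ j, ‖u j‖ ^ 2 / (1 - ‖v j‖ ^ 2) ^ 2 ≤ ‖u‖^2 / (1-r'^2)^2 := by
        intro j
        have e1 : ‖u j‖ ≤ ‖u‖ := norm_le_pi_norm u j
        have e2 : ‖v j‖ ≤ r' := hv j
        have e3 : 0 < 1 - ‖v j‖^2 := by nlinarith [norm_nonneg (v j)]
        have e2' : ‖v j‖^2 ≤ r'^2 := by nlinarith [norm_nonneg (v j)]
        have e4 : (1 - r'^2)^2 ≤ (1 - ‖v j‖^2)^2 := by nlinarith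
        apply div_le_div₀ (by positivity) (by nlinarith [norm_nonneg (u j), norm_nonneg u])
          (by positivity) e4
      calc bergmanH v u ≤ ∑ _j : Fin n, ‖u‖^2 / (1-r'^2)^2 :=
            Finset.sum_le_sum (fun j _ => hterm j)
      _ = n * (‖u‖^2 / (1-r'^2)^2) := by rw [Finset.sum_const]; simp [nsmul_eq_mul]
      _ = (L * ‖u‖)^2 := by
          rw [hL, mul_pow, div_pow, Real.sq_sqrt (Nat.cast_nonneg n)]
          ring
    have h3 : Real.sqrt (bergmanH v u) ≤ L * ‖u‖ := by
      calc Real.sqrt (bergmanH v u) ≤ Real.sqrt ((L * ‖u‖)^2) := Real.sqrt_le_sqrt h2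
      _ = L * ‖u‖ := Real.sqrt_sq (by positivity)
    calc ‖fderiv ℂ f v u‖ ≤ betaP f * Real.sqrt (bergmanH v u) :=
          deriv_bound hf (K_subset_polyDisk h1 hv) u
    _ ≤ 1 * (L * ‖u‖) := by
        apply mul_le_mul hβ h3 (Real.sqrt_nonneg _) (by norm_num)
    _ = L * ‖u‖ := one_mul _
  exact (convex_K r').norm_image_sub_le_of_norm_fderiv_le hdiff hbd hy hx

end CP5

namespace CP6
open CP CP2 CP3 CP4 CP5 Set

variable {n : ℕ}

lemma betaP_le_one {f : (Fin n → ℂ) → ℂ} (hb : blochNormP f ≤ 1) : betaP f ≤ 1 := by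
  have := norm_nonneg (f 0)
  unfold blochNormP at hb
  linarith

lemma norm_f0_le_one (hn : 0 < n) {f : (Fin n → ℂ) → ℂ} (hf : IsBlochP f)
    (hb : blochNormP f ≤ 1) : ‖f 0‖ ≤ 1 := by
  have := betaP_nonneg hn hf
  unfold blochNormP at hb
  linarith

lemma norm_le_one_add_rho (hn : 0 < n) {f : (Fin n → ℂ) → ℂ} (hf : IsBlochP f)
    (hb : blochNormP f ≤ 1) {w : Fin n → ℂ} (hw : w ∈ polyDisk n) :
    ‖f w‖ ≤ 1 + rho w := by
  have h1 : ‖f w - f 0‖ ≤ betaP f * rho w :=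
    growth (betaP_nonneg hn hf) hf.1 (fun z hz u => deriv_bound hf hz u) hw
  have h2 : betaP f * rho w ≤ 1 * rho w :=
    mul_le_mul_of_nonneg_right (betaP_le_one hb) (rho_nonneg hw)
  calc ‖f w‖ ≤ ‖f 0‖ + ‖f w - f 0‖ := by
        have := norm_add_le (f 0) (f w - f 0)
        simpa using this
  _ ≤ 1 + rho w := by
      have := norm_f0_le_one hn hf hb
      rw [one_mul] at h2
      linarith

lemma diff_growth (hn : 0 < n) {f g : (Fin n → ℂ) → ℂ}
    (hf : IsBlochP f) (hbf : blochNormP f ≤ 1) (hg : IsBlochP g) (hbg : blochNormP g ≤ 1)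
    {w : Fin n → ℂ} (hw : w ∈ polyDisk n) :
    ‖f w - g w‖ ≤ ‖f 0 - g 0‖ + 2 * rho w := by
  have key : ‖(f w - g w) - (f 0 - g 0)‖ ≤ 2 * rho w := by
    apply growth (by norm_num) (hf.1.sub hg.1) ?_ hw
    intro z hz u
    have hfd : DifferentiableAt ℂ f z := hf.1.differentiableAt (isOpen_polyDisk.mem_nhds hz)
    have hgd : DifferentiableAt ℂ g z := hg.1.differentiableAt (isOpen_polyDisk.mem_nhds hz)
    have he : fderiv ℂ (f - g) z = fderiv ℂ f z - fderiv ℂ g z := fderiv_sub hfd hgd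
    rw [he]
    have h1 := deriv_bound hf hz u
    have h2 := deriv_bound hg hz u
    have h3 : betaP f * Real.sqrt (bergmanH z u) ≤ 1 * Real.sqrt (bergmanH z u) :=
      mul_le_mul_of_nonneg_right (betaP_le_one hbf) (Real.sqrt_nonneg _)
    have h4 : betaP g * Real.sqrt (bergmanH z u) ≤ 1 * Real.sqrt (bergmanH z u) :=
      mul_le_mul_of_nonneg_right (betaP_le_one hbg) (Real.sqrt_nonneg _)
    calc ‖(fderiv ℂ f z - fderiv ℂ g z) u‖ = ‖fderiv ℂ f z u - fderiv ℂ g z u‖ := rfl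
    _ ≤ ‖fderiv ℂ f z u‖ + ‖fderiv ℂ g z u‖ := norm_sub_le _ _
    _ ≤ 2 * Real.sqrt (bergmanH z u) := by rw [one_mul] at h3 h4; linarith
  calc ‖f w - g w‖ ≤ ‖f 0 - g 0‖ + ‖(f w - g w) - (f 0 - g 0)‖ := by
        have := norm_add_le (f 0 - g 0) ((f w - g w) - (f 0 - g 0))
        simpa using this
  _ ≤ ‖f 0 - g 0‖ + 2 * rho w := by linarith

end CP6

open CP CP2 CP3 CP4 CP5 CP6 Topology in
/-- Sufficient condition for compactness on the polydisk: if ψ ∈ H^∞_μ(𝔻ⁿ) and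
ϑ-quantity tends to 0 as φ(z) → ∂𝔻ⁿ, then W_{ψ,φ} : ℬ(𝔻ⁿ) → H^∞_μ(𝔻ⁿ) is compact. -/
theorem compactness_sufficient_polydisk {n : ℕ} (hn : 0 < n)
    (μ : (Fin n → ℂ) → ℝ) (ψ : (Fin n → ℂ) → ℂ) (φ : (Fin n → ℂ) → Fin n → ℂ)
    (hμc : ContinuousOn μ (polyDisk n)) (hμp : ∀ z ∈ polyDisk n, 0 < μ z)
    (hψ : DifferentiableOn ℂ ψ (polyDisk n))
    (hφ : DifferentiableOn ℂ φ (polyDisk n)) (hφs : ∀ z ∈ polyDisk n, φ z ∈ polyDisk n)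
    (hψμ : BddAbove ((fun z => μ z * ‖ψ z‖) '' polyDisk n))
    (hlim : ∀ ε > 0, ∃ r < (1 : ℝ), ∀ z ∈ polyDisk n,
      (∃ j, r < ‖φ z j‖) → thetaFn μ ψ φ z < ε) :
    WCompactP μ ψ φ := by
  classical
  intro g hg
  obtain ⟨D0, hD0c, hD0d⟩ := TopologicalSpace.exists_countable_dense (Fin n → ℂ)
  set D : Set (Fin n → ℂ) := (D0 ∩ polyDisk n) ∪ {0} with hD
  have hDc : D.Countable := (hD0c.mono Set.inter_subset_left).union (Set.countable_singleton 0)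
  have hDsub : D ⊆ polyDisk n := by
    rintro d (⟨_, hd⟩ | rfl)
    · exact hd
    · exact zero_mem_polyDisk
  haveI : Countable ↥D := hDc.to_subtype
  set R : ↥D → ℝ := fun d => 1 + rho (d : Fin n → ℂ) with hR
  have hgb : ∀ k, (fun d : ↥D => g k (d : Fin n → ℂ)) ∈
      Set.pi Set.univ (fun d : ↥D => Metric.closedBall (0:ℂ) (R d)) := by
    intro k d _
    rw [Metric.mem_closedBall, dist_zero_right]
    exact norm_le_one_add_rho hn (hg k).1 (hg k).2 (hDsub d.2)
  have hS : IsCompact (Set.pi Set.univ (fun d : ↥D => Metric.closedBall (0:ℂ) (R d))) :=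
    isCompact_univ_pi (fun d => isCompact_closedBall _ _)
  obtain ⟨Lpt, _, σ, hσ, hconv⟩ := hS.tendsto_subseq hgb
  have hptD : ∀ d : ↥D, Tendsto (fun k => g (σ k) (d : Fin n → ℂ)) atTop (𝓝 (Lpt d)) :=
    fun d => tendsto_pi_nhds.1 hconv d
  have hcauD : ∀ d : ↥D, ∀ η > (0:ℝ), ∃ N, ∀ j ≥ N, ∀ m ≥ N,
      ‖g (σ j) (d : Fin n → ℂ) - g (σ m) (d : Fin n → ℂ)‖ ≤ η := by
    intro d η hη
    obtain ⟨N, hN⟩ := (Metric.tendsto_atTop.1 (hptD d)) (η/2) (by positivity)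
    refine ⟨N, fun j hj m hm => ?_⟩
    have h1 := hN j hj
    have h2 := hN m hm
    have := dist_triangle_right (g (σ j) (d : Fin n → ℂ)) (g (σ m) (d : Fin n → ℂ)) (Lpt d)
    rw [← dist_eq_norm]
    linarith
  -- the numerical bound data
  obtain ⟨C, hCb⟩ := hψμ
  have hCspec : ∀ z ∈ polyDisk n, μ z * ‖ψ z‖ ≤ C := fun z hz => hCb ⟨z, hz, rfl⟩
  have hC0 : 0 ≤ C := le_trans
    (mul_nonneg (hμp 0 zero_mem_polyDisk).le (norm_nonneg _)) (hCspec 0 zero_mem_polyDisk)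
  set C' : ℝ := C + 1 with hC'def
  have hC' : 0 < C' := by linarith
  have h0D : (0 : Fin n → ℂ) ∈ D := Set.mem_union_right _ rfl
  -- the key uniform Cauchy estimate
  have key : ∀ ε > (0:ℝ), ∃ N, ∀ j ≥ N, ∀ m ≥ N, ∀ z ∈ polyDisk n,
      μ z * (‖ψ z‖ * ‖g (σ j) (φ z) - g (σ m) (φ z)‖) ≤ ε := by
    intro ε hε
    obtain ⟨r, hr1, hrθ⟩ := hlim (ε/4) (by positivity)
    set r₀ : ℝ := max r 0 with hr₀def
    have hr₀0 : 0 ≤ r₀ := le_max_right _ _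
    have hr₀1 : r₀ < 1 := max_lt hr1 one_pos
    set r' : ℝ := (1 + r₀)/2 with hr'def
    have h0r' : 0 ≤ r' := by simp only [hr'def]; linarith
    have hr'1 : r' < 1 := by simp only [hr'def]; linarith
    have hr₀r' : r₀ < r' := by simp only [hr'def]; linarith
    set L : ℝ := Real.sqrt n / (1 - r'^2) with hLdef
    have hL0 : 0 ≤ L := div_nonneg (Real.sqrt_nonneg _) (by nlinarith)
    set δ : ℝ := min ((r' - r₀)/2) (ε / (2*C'*(2*L+1))) with hδdef
    have hδ0 : 0 < δ := lt_min (by linarith) (by positivity)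
    have hδr : δ ≤ (r' - r₀)/2 := min_le_left _ _
    have hδε : δ ≤ ε / (2*C'*(2*L+1)) := min_le_right _ _
    -- covering of the compact polydisk of radius r₀ by finitely many δ-balls centered in D
    have hcov : K n r₀ ⊆ ⋃ d : ↥(D0 ∩ polyDisk n), Metric.ball (d : Fin n → ℂ) δ := by
      intro x hx
      obtain ⟨d, hdD0, hdist⟩ := Metric.mem_closure_iff.1 (hD0d x) δ hδ0
      have hclose : ∀ jj, ‖d jj‖ ≤ r₀ + δ := by
        intro jj
        have h1 : ‖d jj - x jj‖ ≤ ‖d - x‖ := norm_le_pi_norm (d - x) jj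
        have h2 : ‖d - x‖ = dist x d := by rw [dist_eq_norm, norm_sub_rev]
        have h3 : ‖d jj‖ ≤ ‖x jj‖ + ‖d jj - x jj‖ := by
          have := norm_add_le (x jj) (d jj - x jj)
          simpa using this
        have := hx jj
        calc ‖d jj‖ ≤ ‖x jj‖ + ‖d jj - x jj‖ := h3
        _ ≤ r₀ + δ := add_le_add (hx jj) ((h1.trans_eq h2).trans hdist.le)
      have hdpd : d ∈ polyDisk n := by
        intro jj
        calc ‖d jj‖ ≤ r₀ + δ := hclose jj
        _ < 1 := by linarith
      exact Set.mem_iUnion.2 ⟨⟨d, hdD0, hdpd⟩, Metric.mem_ball.2 hdist⟩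
    obtain ⟨T, hT⟩ := (isCompact_K (n := n) r₀).elim_finite_subcover
      (fun d : ↥(D0 ∩ polyDisk n) => Metric.ball (d : Fin n → ℂ) δ)
      (fun _ => Metric.isOpen_ball) hcov
    set η : ℝ := ε/(2*C') with hηdef
    have hη : 0 < η := by positivity
    have toD : ∀ d : ↥(D0 ∩ polyDisk n), (d : Fin n → ℂ) ∈ D :=
      fun d => Set.mem_union_left _ d.2
    choose Nd hNd using fun d : ↥D => hcauD d η hη
    set N : ℕ := max (Nd ⟨0, h0D⟩) (T.sup (fun d => Nd ⟨d, toD d⟩)) with hNdef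
    refine ⟨N, fun j hj m hm z hz => ?_⟩
    have hμψC' : μ z * ‖ψ z‖ ≤ C' := le_trans (hCspec z hz) (by linarith)
    have hμψ0 : 0 ≤ μ z * ‖ψ z‖ := mul_nonneg (hμp z hz).le (norm_nonneg _)
    by_cases hcase : ∀ jj, ‖φ z jj‖ ≤ r₀
    · -- inner region
      have hwK : φ z ∈ K n r₀ := hcase
      obtain ⟨d, hdT, hdball⟩ := Set.mem_iUnion₂.1 (hT hwK)
      have hdistwd : dist (φ z) (d : Fin n → ℂ) < δ := Metric.mem_ball.1 hdball
      have hwK' : φ z ∈ K n r' := fun jj => le_trans (hcase jj) hr₀r'.le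
      have hdK' : (d : Fin n → ℂ) ∈ K n r' := by
        intro jj
        have h1 : ‖(d : Fin n → ℂ) jj - φ z jj‖ ≤ ‖(d : Fin n → ℂ) - φ z‖ :=
          norm_le_pi_norm ((d : Fin n → ℂ) - φ z) jj
        have h2 : ‖(d : Fin n → ℂ) - φ z‖ = dist (φ z) (d : Fin n → ℂ) := by
          rw [dist_eq_norm, norm_sub_rev]
        have h3 : ‖(d : Fin n → ℂ) jj‖ ≤ ‖φ z jj‖ + ‖(d : Fin n → ℂ) jj - φ z jj‖ := by
          have := norm_add_le (φ z jj) ((d : Fin n → ℂ) jj - φ z jj)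
          simpa using this
        calc ‖(d : Fin n → ℂ) jj‖ ≤ ‖φ z jj‖ + ‖(d : Fin n → ℂ) jj - φ z jj‖ := h3
        _ ≤ r₀ + δ := by
            have := h1.trans (h2.le.trans hdistwd.le)
            exact add_le_add (hcase jj) (h1.trans (le_of_eq_of_le h2 hdistwd.le))
        _ ≤ r' := by linarith
      have hNdle : Nd ⟨d, toD d⟩ ≤ N := by
        rw [hNdef]
        exact le_trans (Finset.le_sup (f := fun d : ↥(D0 ∩ polyDisk n) => Nd ⟨↑d, toD d⟩) hdT) (le_max_right _ _)
      have hdd := hNd ⟨d, toD d⟩ j (le_trans hNdle hj) m (le_trans hNdle hm)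
      have hlipj := lipschitz_on_K (hg (σ j)).1 (betaP_le_one (hg (σ j)).2) h0r' hr'1 hwK' hdK'
      have hlipm := lipschitz_on_K (hg (σ m)).1 (betaP_le_one (hg (σ m)).2) h0r' hr'1 hwK' hdK'
      have hnormwd : ‖φ z - (d : Fin n → ℂ)‖ ≤ δ := by
        rw [← dist_eq_norm]
        exact hdistwd.le
      have h2Lδ : 2*L*δ ≤ ε/(2*C') := by
        rw [le_div_iff₀ (by positivity)]
        rw [le_div_iff₀ (by positivity)] at hδε
        nlinarith [hδ0.le, hC'.le, hL0]
      have hdiffle : ‖g (σ j) (φ z) - g (σ m) (φ z)‖ ≤ ε/C' := by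
        have t1 : ‖g (σ j) (φ z) - g (σ m) (φ z)‖ ≤
            ‖g (σ j) (φ z) - g (σ j) (d : Fin n → ℂ)‖ +
            ‖g (σ j) (d : Fin n → ℂ) - g (σ m) (d : Fin n → ℂ)‖ +
            ‖g (σ m) (d : Fin n → ℂ) - g (σ m) (φ z)‖ := by
          have := norm_add₃_le (a := g (σ j) (φ z) - g (σ j) (d : Fin n → ℂ))
            (b := g (σ j) (d : Fin n → ℂ) - g (σ m) (d : Fin n → ℂ))
            (c := g (σ m) (d : Fin n → ℂ) - g (σ m) (φ z))
          simpa using this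
        have t2 : ‖g (σ j) (φ z) - g (σ j) (d : Fin n → ℂ)‖ ≤ L * δ :=
          le_trans hlipj (mul_le_mul_of_nonneg_left hnormwd hL0)
        have t3 : ‖g (σ m) (d : Fin n → ℂ) - g (σ m) (φ z)‖ ≤ L * δ := by
          have := lipschitz_on_K (hg (σ m)).1 (betaP_le_one (hg (σ m)).2) h0r' hr'1 hdK' hwK'
          refine le_trans this ?_
          rw [norm_sub_rev]
          exact mul_le_mul_of_nonneg_left hnormwd hL0
        have : ε/C' = ε/(2*C') + ε/(2*C') := by field_simp; ring
        rw [this]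
        linarith
      calc μ z * (‖ψ z‖ * ‖g (σ j) (φ z) - g (σ m) (φ z)‖)
          = (μ z * ‖ψ z‖) * ‖g (σ j) (φ z) - g (σ m) (φ z)‖ := by ring
      _ ≤ C' * (ε/C') := mul_le_mul hμψC' hdiffle (norm_nonneg _) hC'.le
      _ = ε := by field_simp
    · -- boundary region
      push_neg at hcase
      obtain ⟨jj, hjj⟩ := hcase
      have hθ := hrθ z hz ⟨jj, lt_of_le_of_lt (le_max_left r 0) hjj⟩
      have hgrow := diff_growth hn (hg (σ j)).1 (hg (σ j)).2 (hg (σ m)).1 (hg (σ m)).2 (hφs z hz)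
      have hN0le : Nd ⟨0, h0D⟩ ≤ N := by rw [hNdef]; exact le_max_left _ _
      have h00 := hNd ⟨0, h0D⟩ j (le_trans hN0le hj) m (le_trans hN0le hm)
      have e1 : μ z * (‖ψ z‖ * ‖g (σ j) (φ z) - g (σ m) (φ z)‖) ≤
          μ z * (‖ψ z‖ * (η + 2 * rho (φ z))) := by
        apply mul_le_mul_of_nonneg_left ?_ (hμp z hz).le
        apply mul_le_mul_of_nonneg_left ?_ (norm_nonneg _)
        calc ‖g (σ j) (φ z) - g (σ m) (φ z)‖
            ≤ ‖g (σ j) 0 - g (σ m) 0‖ + 2 * rho (φ z) := hgrow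
        _ ≤ η + 2 * rho (φ z) := by
            have : ‖g (σ j) 0 - g (σ m) 0‖ ≤ η := h00
            linarith
      have e2 : μ z * (‖ψ z‖ * (η + 2 * rho (φ z))) =
          (μ z * ‖ψ z‖) * η + 2 * thetaFn μ ψ φ z := by
        simp only [thetaFn, rho]
        ring
      have e3 : (μ z * ‖ψ z‖) * η ≤ C' * η := mul_le_mul_of_nonneg_right hμψC' hη.le
      have e4 : C' * η = ε/2 := by
        rw [hηdef]
        field_simp
      calc μ z * (‖ψ z‖ * ‖g (σ j) (φ z) - g (σ m) (φ z)‖)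
          ≤ μ z * (‖ψ z‖ * (η + 2 * rho (φ z))) := e1
      _ = μ z * ‖ψ z‖ * η + 2 * thetaFn μ ψ φ z := e2
      _ ≤ C' * η + 2 * (ε/4) := add_le_add e3 (by linarith)
      _ = ε := by rw [e4]; ring
  -- construct the limit function h
  have hFc : ∀ z, z ∈ polyDisk n → ∃ c : ℂ,
      Tendsto (fun k => ψ z * g (σ k) (φ z)) atTop (𝓝 c) := by
    intro z hz
    apply cauchySeq_tendsto_of_complete
    rw [Metric.cauchySeq_iff]
    intro η hη
    obtain ⟨N, hN⟩ := key (η/2 * μ z) (by have := hμp z hz; positivity)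
    refine ⟨N, fun j hj m hm => ?_⟩
    have hjm := hN j hj m hm z hz
    rw [dist_eq_norm]
    have heq : ψ z * g (σ j) (φ z) - ψ z * g (σ m) (φ z) =
        ψ z * (g (σ j) (φ z) - g (σ m) (φ z)) := by ring
    rw [heq, norm_mul]
    have hμz := hμp z hz
    have h2 : ‖ψ z‖ * ‖g (σ j) (φ z) - g (σ m) (φ z)‖ ≤ η/2 := by
      by_contra hcon
      push_neg at hcon
      nlinarith
    linarith
  set h : (Fin n → ℂ) → ℂ := fun z => if hz : z ∈ polyDisk n then (hFc z hz).choose else 0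
    with hhdef
  refine ⟨σ, hσ, h, ?_⟩
  intro ε hε
  obtain ⟨N, hN⟩ := key (ε/2) (by positivity)
  refine ⟨N, fun j hj z hz => ?_⟩
  have hhz : h z = (hFc z hz).choose := by simp only [hhdef, dif_pos hz]
  have hlimz : Tendsto (fun k => ψ z * g (σ k) (φ z)) atTop (𝓝 (h z)) := by
    rw [hhz]; exact (hFc z hz).choose_spec
  have hle : ∀ m ≥ N, μ z * ‖ψ z * g (σ j) (φ z) - ψ z * g (σ m) (φ z)‖ ≤ ε/2 := by
    intro m hm
    have hjm := hN j hj m hm z hz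
    have heq : ψ z * g (σ j) (φ z) - ψ z * g (σ m) (φ z) =
        ψ z * (g (σ j) (φ z) - g (σ m) (φ z)) := by ring
    rw [heq, norm_mul, ← mul_assoc]
    calc μ z * ‖ψ z‖ * ‖g (σ j) (φ z) - g (σ m) (φ z)‖
        = μ z * (‖ψ z‖ * ‖g (σ j) (φ z) - g (σ m) (φ z)‖) := by ring
    _ ≤ ε/2 := hjm
  have htend : Tendsto (fun m => μ z * ‖ψ z * g (σ j) (φ z) - ψ z * g (σ m) (φ z)‖) atTop
      (𝓝 (μ z * ‖ψ z * g (σ j) (φ z) - h z‖)) :=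
    tendsto_const_nhds.mul ((tendsto_const_nhds.sub hlimz).norm)
  have hfin := le_of_tendsto htend (eventually_atTop.2 ⟨N, hle⟩)
  linarith
end
end

section
/- Let μ : 𝔻 → (0,∞) be continuous, ψ holomorphic on 𝔻, and φ a holomorphic self-map of 𝔻. If ψ ∈ H^∞_μ(𝔻) and μ(z)|ψ(z)|·(1/2)log((1+|φ(z)|)/(1-|φ(z)|)) → 0 as |φ(z)| → 1, then for every sequence (f_k) of holomorphic functions on 𝔻 with ‖f_k‖_ℬ ≤ 1, f_k(0) = 0, and f_k → 0 uniformly on compact subsets of 𝔻, one has sup_{z∈𝔻} μ(z)|ψ(z)||f_k(φ(z))| → 0 as k → ∞. -/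
open Complex Filter

noncomputable section

/-- The open unit disk in ℂ. -/
def unitDisk : Set ℂ := Metric.ball 0 1

/-- The Bloch seminorm β_f = sup_{z∈𝔻} (1-|z|²)|f'(z)|. -/
def betaSem (f : ℂ → ℂ) : ℝ :=
  sSup ((fun z => (1 - ‖z‖ ^ 2) * ‖deriv f z‖) '' unitDisk)

/-- A holomorphic function on 𝔻 with finite Bloch seminorm. -/
def IsBlochFn (f : ℂ → ℂ) : Prop :=
  DifferentiableOn ℂ f unitDisk ∧
    BddAbove ((fun z => (1 - ‖z‖ ^ 2) * ‖deriv f z‖) '' unitDisk)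

/-- The Bloch norm ‖f‖_ℬ = |f(0)| + β_f. -/
def blochNorm (f : ℂ → ℂ) : ℝ := ‖f 0‖ + betaSem f

/-- ω(z) = sup { |f(z)| : f Bloch on 𝔻, f(0)=0, ‖f‖_ℬ ≤ 1 }. -/
def omegaD (z : ℂ) : ℝ :=
  sSup {r : ℝ | ∃ f : ℂ → ℂ, IsBlochFn f ∧ f 0 = 0 ∧ blochNorm f ≤ 1 ∧ r = ‖f z‖}

/-- The set of values μ(z)|ψ(z)||f(φ(z))| over f in the unit ball of ℬ(𝔻) and z ∈ 𝔻;
its supremum is the operator norm of W_{ψ,φ} : ℬ(𝔻) → H^∞_μ(𝔻). -/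
def WSet (μ : ℂ → ℝ) (ψ φ : ℂ → ℂ) : Set ℝ :=
  {r : ℝ | ∃ f : ℂ → ℂ, IsBlochFn f ∧ blochNorm f ≤ 1 ∧
    ∃ z ∈ unitDisk, r = μ z * (‖ψ z‖ * ‖f (φ z)‖)}

/-- Boundedness of W_{ψ,φ} : ℬ(𝔻) → H^∞_μ(𝔻). -/
def WBounded (μ : ℂ → ℝ) (ψ φ : ℂ → ℂ) : Prop := BddAbove (WSet μ ψ φ)

/-- The operator norm of W_{ψ,φ} : ℬ(𝔻) → H^∞_μ(𝔻). -/
def WNorm (μ : ℂ → ℝ) (ψ φ : ℂ → ℂ) : ℝ := sSup (WSet μ ψ φ)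

/-- Compactness of W_{ψ,φ} : ℬ(𝔻) → H^∞_μ(𝔻): every sequence in the image of the
unit ball of ℬ(𝔻) has a subsequence converging in the norm of H^∞_μ(𝔻). -/
def WCompact (μ : ℂ → ℝ) (ψ φ : ℂ → ℂ) : Prop :=
  ∀ g : ℕ → ℂ → ℂ, (∀ k, IsBlochFn (g k) ∧ blochNorm (g k) ≤ 1) →
    ∃ σ : ℕ → ℕ, StrictMono σ ∧ ∃ h : ℂ → ℂ,
      ∀ ε > 0, ∃ N : ℕ, ∀ j ≥ N, ∀ z ∈ unitDisk,
        μ z * ‖ψ z * g (σ j) (φ z) - h z‖ ≤ ε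

/-- Growth estimate for Bloch functions: if `f` is in the unit ball of the Bloch
space and `f 0 = 0`, then `‖f w‖ ≤ (1/2) log((1+‖w‖)/(1-‖w‖))` on the disk. -/
lemma bloch_growth {f : ℂ → ℂ} (hf : IsBlochFn f) (h0 : f 0 = 0)
    (hn : blochNorm f ≤ 1) {w : ℂ} (hw : w ∈ unitDisk) :
    ‖f w‖ ≤ (1 / 2) * Real.log ((1 + ‖w‖) / (1 - ‖w‖)) := by
  set a := ‖w‖ with ha_def
  have ha0 : 0 ≤ a := norm_nonneg w
  have ha1 : a < 1 := by simpa [unitDisk, a] using hw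
  have hbeta : ∀ z ∈ unitDisk, ‖deriv f z‖ ≤ 1 / (1 - ‖z‖ ^ 2) := by
    intro z hz
    have hz1 : ‖z‖ < 1 := by simpa [unitDisk] using hz
    have hpos : 0 < 1 - ‖z‖ ^ 2 := by nlinarith [norm_nonneg z]
    have h1 : (1 - ‖z‖ ^ 2) * ‖deriv f z‖ ≤ betaSem f := le_csSup hf.2 ⟨z, hz, rfl⟩
    have h2 : betaSem f ≤ 1 := by
      have : blochNorm f = betaSem f := by simp [blochNorm, h0]
      linarith [hn, this.symm.le]
    rw [le_div_iff₀ hpos]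
    linarith [h1, h2]
  -- the radial function g t = f (t w)
  set g : ℝ → ℂ := fun t => f ((t : ℂ) * w) with hg_def
  have hmem : ∀ t ∈ Set.Icc (0 : ℝ) 1, (t : ℂ) * w ∈ unitDisk := by
    intro t ht
    have h : ‖(t : ℂ) * w‖ = t * a := by
      rw [norm_mul, Complex.norm_real, Real.norm_eq_abs, _root_.abs_of_nonneg ht.1]
    simp only [unitDisk, Metric.mem_ball, dist_zero_right, h]
    nlinarith [ht.1, ht.2]
  have hopen : IsOpen unitDisk := Metric.isOpen_ball
  have hline : ∀ t : ℝ, HasDerivAt (fun s : ℝ => (s : ℂ) * w) w t := by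
    intro t
    simpa using (Complex.ofRealCLM.hasDerivAt (x := t)).mul_const w
  have hg' : ∀ t ∈ Set.Ico (0 : ℝ) 1,
      HasDerivAt g (w • deriv f ((t : ℂ) * w)) t := by
    intro t ht
    have hmem' : (t : ℂ) * w ∈ unitDisk := hmem t ⟨ht.1, ht.2.le⟩
    have hdf : HasDerivAt f (deriv f ((t : ℂ) * w)) ((t : ℂ) * w) :=
      (hf.1.differentiableAt (hopen.mem_nhds hmem')).hasDerivAt
    exact HasDerivAt.scomp t hdf (hline t)
  have hgc : ContinuousOn g (Set.Icc 0 1) := by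
    apply (hf.1.continuousOn.comp (Continuous.continuousOn (by continuity)))
    intro t ht
    exact hmem t ht
  -- the boundary function
  set B : ℝ → ℝ := fun t => (1 / 2) * (Real.log (1 + t * a) - Real.log (1 - t * a))
    with hB_def
  set B' : ℝ → ℝ := fun t => a / (1 - (t * a) ^ 2) with hB'_def
  have hBder : ∀ t ∈ Set.Icc (0 : ℝ) 1, HasDerivAt B (B' t) t := by
    intro t ht
    have hta : t * a < 1 := by nlinarith [ht.1, ht.2]
    have hta0 : 0 ≤ t * a := mul_nonneg ht.1 ha0
    have h1 : (0 : ℝ) < 1 + t * a := by linarith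
    have h2 : (0 : ℝ) < 1 - t * a := by linarith
    have d1 : HasDerivAt (fun s : ℝ => 1 + s * a) a t := by
      simpa using (hasDerivAt_mul_const a (x := t)).const_add 1
    have d2 : HasDerivAt (fun s : ℝ => 1 - s * a) (-a) t := by
      simpa using (hasDerivAt_mul_const a (x := t)).const_sub 1
    have l1 : HasDerivAt (fun s : ℝ => Real.log (1 + s * a)) (a / (1 + t * a)) t :=
      d1.log h1.ne'
    have l2 : HasDerivAt (fun s : ℝ => Real.log (1 - s * a)) (-a / (1 - t * a)) t :=
      d2.log h2.ne'
    have h3 : (1 : ℝ) - (t * a) ^ 2 ≠ 0 := by nlinarith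
    have := ((l1.sub l2).const_mul (1 / 2 : ℝ))
    refine this.congr_deriv ?_
    rw [hB'_def]
    show _ = a / (1 - (t * a) ^ 2)
    rw [div_sub_div _ _ h1.ne' h2.ne', mul_div_assoc', div_eq_div_iff (by positivity) h3]
    ring
  have key : ∀ x ∈ Set.Icc (0 : ℝ) 1, ‖g x‖ ≤ B x := by
    apply image_norm_le_of_norm_deriv_right_le_deriv_boundary' hgc
      (fun t ht => (hg' t ht).hasDerivWithinAt)
      (by simp [hg_def, h0, hB_def])
      (fun t ht => (hBder t ht).continuousAt.continuousWithinAt)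
      (fun t ht => (hBder t ⟨ht.1, ht.2.le⟩).hasDerivWithinAt)
    intro t ht
    have hta : t * a < 1 := by nlinarith [ht.1, ht.2, ha1, ha0]
    have hta0 : 0 ≤ t * a := mul_nonneg ht.1 ha0
    have hposd : 0 < 1 - (t * a) ^ 2 := by nlinarith
    have hmem' : (t : ℂ) * w ∈ unitDisk := hmem t ⟨ht.1, ht.2.le⟩
    have hnrm : ‖(t : ℂ) * w‖ = t * a := by
      rw [norm_mul, Complex.norm_real, Real.norm_eq_abs, _root_.abs_of_nonneg ht.1]
    have hd := hbeta _ hmem'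
    rw [hnrm] at hd
    have : ‖w • deriv f ((t : ℂ) * w)‖ = a * ‖deriv f ((t : ℂ) * w)‖ := by
      simp [a, mul_comm]
    rw [this]
    calc a * ‖deriv f ((t : ℂ) * w)‖ ≤ a * (1 / (1 - (t * a) ^ 2)) :=
          mul_le_mul_of_nonneg_left hd ha0
      _ = B' t := by rw [hB'_def]; ring
  have h1 := key 1 ⟨zero_le_one, le_rfl⟩
  have hfw : g 1 = f w := by simp [hg_def]
  rw [hfw] at h1
  have hlog : B 1 = (1 / 2) * Real.log ((1 + a) / (1 - a)) := by
    rw [hB_def]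
    simp only [one_mul]
    rw [Real.log_div (by linarith) (by linarith)]
  rw [hlog] at h1
  exact h1

/-- Sufficient condition for compactness on the disk: if ψ ∈ H^∞_μ(𝔻) and
μ(z)|ψ(z)|(1/2)log((1+|φ(z)|)/(1-|φ(z)|)) → 0 as |φ(z)| → 1, then for every
sequence (f_k) in the unit ball of ℬ(𝔻) with f_k(0)=0 converging to 0 locally
uniformly, sup_z μ(z)|ψ(z)||f_k(φ(z))| → 0. -/
theorem compactness_sufficient_disk (μ : ℂ → ℝ) (ψ φ : ℂ → ℂ)
    (hμc : ContinuousOn μ unitDisk) (hμp : ∀ z ∈ unitDisk, 0 < μ z)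
    (hψ : DifferentiableOn ℂ ψ unitDisk)
    (hφ : DifferentiableOn ℂ φ unitDisk) (hφs : ∀ z ∈ unitDisk, φ z ∈ unitDisk)
    (hψμ : BddAbove ((fun z => μ z * ‖ψ z‖) '' unitDisk))
    (hlim : ∀ ε > 0, ∃ r < (1 : ℝ), ∀ z ∈ unitDisk, r < ‖φ z‖ →
      μ z * (‖ψ z‖ * ((1 / 2) * Real.log ((1 + ‖φ z‖) / (1 - ‖φ z‖)))) < ε) :
    ∀ f : ℕ → ℂ → ℂ,
      (∀ k, IsBlochFn (f k) ∧ blochNorm (f k) ≤ 1 ∧ f k 0 = 0) →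
      TendstoLocallyUniformlyOn f 0 atTop unitDisk →
      ∀ ε > 0, ∃ N : ℕ, ∀ k ≥ N, ∀ z ∈ unitDisk,
        μ z * (‖ψ z‖ * ‖f k (φ z)‖) ≤ ε := by
  intro f hf hconv ε hε
  -- the bound M on μ‖ψ‖
  set M := sSup ((fun z => μ z * ‖ψ z‖) '' unitDisk) with hM_def
  have h0disk : (0 : ℂ) ∈ unitDisk := by simp [unitDisk]
  have hM : ∀ z ∈ unitDisk, μ z * ‖ψ z‖ ≤ M := fun z hz => le_csSup hψμ ⟨z, hz, rfl⟩
  have hM0 : 0 ≤ M :=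
    le_trans (mul_nonneg (hμp 0 h0disk).le (norm_nonneg _)) (hM 0 h0disk)
  -- choose r from hlim
  obtain ⟨r, hr1, hr⟩ := hlim ε hε
  set r' := max r 0 with hr'_def
  have hr'1 : r' < 1 := by simp [hr'_def, hr1]
  have hr'0 : 0 ≤ r' := le_max_right r 0
  -- uniform convergence on the compact set closedBall 0 r'
  set K : Set ℂ := Metric.closedBall 0 r' with hK_def
  have hKsub : K ⊆ unitDisk := by
    intro x hx
    simp only [hK_def, Metric.mem_closedBall, dist_zero_right] at hx
    simp only [unitDisk, Metric.mem_ball, dist_zero_right]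
    exact lt_of_le_of_lt hx hr'1
  have hKc : IsCompact K := isCompact_closedBall 0 r'
  have huniform : TendstoUniformlyOn f 0 atTop K :=
    (tendstoLocallyUniformlyOn_iff_forall_isCompact Metric.isOpen_ball).mp hconv K hKsub hKc
  have hδ : (0 : ℝ) < ε / (M + 1) := div_pos hε (by linarith)
  have := (Metric.tendstoUniformlyOn_iff.mp huniform) (ε / (M + 1)) hδ
  rw [Filter.eventually_atTop] at this
  obtain ⟨N, hN⟩ := this
  refine ⟨N, fun k hk z hz => ?_⟩
  have hφz : φ z ∈ unitDisk := hφs z hz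
  have hμψ0 : 0 ≤ μ z * ‖ψ z‖ := mul_nonneg (hμp z hz).le (norm_nonneg _)
  by_cases hcase : r < ‖φ z‖
  · -- far region: use the growth estimate and hlim
    have hgrow := bloch_growth (hf k).1 (hf k).2.2 (hf k).2.1 hφz
    have hstep : μ z * (‖ψ z‖ * ‖f k (φ z)‖) ≤
        μ z * (‖ψ z‖ * ((1 / 2) * Real.log ((1 + ‖φ z‖) / (1 - ‖φ z‖)))) := by
      rw [← mul_assoc, ← mul_assoc]
      exact mul_le_mul_of_nonneg_left hgrow hμψ0
    exact le_of_lt (lt_of_le_of_lt hstep (hr z hz hcase))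
  · -- near region: uniform convergence
    push_neg at hcase
    have hφK : φ z ∈ K := by
      simp only [hK_def, Metric.mem_closedBall, dist_zero_right]
      exact le_trans hcase (le_max_left r 0)
    have hsmall := hN k hk (φ z) hφK
    have hsmall' : ‖f k (φ z)‖ < ε / (M + 1) := by
      simpa [dist_eq_norm] using hsmall
    calc μ z * (‖ψ z‖ * ‖f k (φ z)‖) = (μ z * ‖ψ z‖) * ‖f k (φ z)‖ := by ring
      _ ≤ M * (ε / (M + 1)) := by
          apply mul_le_mul (hM z hz) hsmall'.le (norm_nonneg _) hM0
      _ ≤ ε := by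
          rw [div_eq_inv_mul, ← mul_assoc]
          have : M * (M + 1)⁻¹ ≤ 1 := by
            rw [mul_inv_le_iff₀' (by linarith)]
            linarith
          nlinarith [this, hε.le]
end
end
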